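/- Every local subring (A, m) of a field K is dominated by some valuation ring of K: there exists a valuation ring (A_ν, m_ν) of K with A ⊆ A_ν and m = m_ν ∩ A. -/
import Mathlib

/-- Every local subring `(A, m)` of a field `K` is dominated by a valuation ring of `K`:
there is a valuation ring `B` of `K` with `A ⊆ B` such that the maximal ideal of `A`
is the trace of the maximal ideal of `B` (equivalently, an element of `A` is a nonunit
of `A` iff it is a nonunit of `B`). -/
theorem stmt_16 {K : Type*} [Field K] (A : Subring K) [IsLocalRing A] :
    ∃ B : ValuationSubring K, ∃ h : (A : Set K) ⊆ (B : Set K),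
      ∀ (x : K) (hx : x ∈ A),
        (¬ IsUnit (⟨x, hx⟩ : A)) ↔ ¬ IsUnit (⟨x, h hx⟩ : B) := by
  obtain ⟨B, hle, hloc⟩ := (LocalSubring.mk A).exists_le_valuationSubring
  refine ⟨B, hle, fun x hx ↦ not_iff_not.mpr ?_⟩
  constructor
  · intro h
    exact (h.map (Subring.inclusion hle))
  · intro h
    exact hloc.1 ⟨x, hx⟩ h
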